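/- If a finite Wang tileset τ admits a tiling f of the plane in which some tile t appears at most once in each row, then τ \ {t} admits a tiling of the plane. -/

import Mathlib

structure WangTile (C : Type) where
  e : C
  w : C
  n : C
  s : C
deriving DecidableEq

def IsTiling {C : Type} (τ : Set (WangTile C)) (f : ℤ → ℤ → WangTile C) : Prop :=
  (∀ i j, f i j ∈ τ) ∧ (∀ i j, (f i j).e = (f (i+1) j).w) ∧
    (∀ i j, (f i j).n = (f i (j+1)).s)

/-!
Translate `f` horizontally by every `s : ℤ` and pass to the limit of these translates along a
free ultrafilter on `ℤ`; since `τ` is finite, the limit exists and is again a tiling by `τ`.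
Because `t` occurs at most once in row `j`, at most one shift `s` puts `t` at position `(i, j)`,
so a free ultrafilter never sees `t` there and the limit tiling avoids `t`.
-/

open Filter

namespace IsTiling

variable {C : Type} {τ : Set (WangTile C)}

theorem shift {f : ℤ → ℤ → WangTile C} (hf : IsTiling τ f) (s : ℤ) :
    IsTiling τ (fun i j => f (i + s) j) := by
  refine ⟨fun i j => hf.1 _ _, fun i j => ?_, fun i j => hf.2.2 _ _⟩
  show (f (i + s) j).e = (f (i + 1 + s) j).w
  rw [add_right_comm]
  exact hf.2.1 _ _

theorem exists_ultrafilter_limit (hτ : τ.Finite) {ι : Type*} {F : ι → ℤ → ℤ → WangTile C}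
    (hF : ∀ k, IsTiling τ (F k)) (U : Ultrafilter ι) :
    ∃ g, IsTiling τ g ∧ ∀ i j, ∀ᶠ k in U, F k i j = g i j := by
  have hlim : ∀ i j, ∃ a, ∀ᶠ k in U, F k i j = a := by
    intro i j
    have hcover : (⋃ a ∈ τ, {k | F k i j = a}) ∈ U :=
      univ_mem' fun k => Set.mem_biUnion ((hF k).1 i j) rfl
    obtain ⟨a, -, ha⟩ := (Ultrafilter.finite_biUnion_mem_iff hτ).1 hcover
    exact ⟨a, ha⟩
  choose g hg using hlim
  refine ⟨g, ⟨fun i j => ?_, fun i j => ?_, fun i j => ?_⟩, hg⟩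
  · obtain ⟨k, hk⟩ := (hg i j).exists
    exact hk ▸ (hF k).1 i j
  · obtain ⟨k, hk, hk'⟩ := ((hg i j).and (hg (i + 1) j)).exists
    exact hk ▸ hk' ▸ (hF k).2.1 i j
  · obtain ⟨k, hk, hk'⟩ := ((hg i j).and (hg i (j + 1))).exists
    exact hk ▸ hk' ▸ (hF k).2.2 i j

end IsTiling

theorem stmt14_general {C : Type} (τ : Finset (WangTile C))
    (f : ℤ → ℤ → WangTile C) (hf : IsTiling (↑τ : Set (WangTile C)) f)
    (t : WangTile C)
    (honce : ∀ j i i' : ℤ, f i j = t → f i' j = t → i = i') :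
    ∃ g, IsTiling (↑τ : Set (WangTile C)) g ∧ ∀ i j, g i j ≠ t := by
  obtain ⟨g, hg, hlim⟩ :=
    IsTiling.exists_ultrafilter_limit τ.finite_toSet hf.shift (hyperfilter ℤ)
  refine ⟨g, hg, fun i j hgt => ?_⟩
  have hbad : {s : ℤ | f (i + s) j = t}.Subsingleton := fun s hs s' hs' =>
    add_left_cancel (honce j _ _ hs hs')
  have hlim_t := hlim i j
  rw [hgt] at hlim_t
  exact hbad.finite.notMem_hyperfilter hlim_t

theorem stmt14 {C : Type} [Fintype C] [DecidableEq C] (τ : Finset (WangTile C))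
    (f : ℤ → ℤ → WangTile C) (hf : IsTiling (↑τ : Set (WangTile C)) f)
    (t : WangTile C)
    (honce : ∀ j i i' : ℤ, f i j = t → f i' j = t → i = i') :
    ∃ g, IsTiling (↑τ : Set (WangTile C)) g ∧ ∀ i j, g i j ≠ t :=
  stmt14_general τ f hf t honce
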